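/- Let X be a random variable taking values x_1 < x_2 < ... < x_n with probabilities p_i = P(X = x_i), and suppose P(X = x_1) ≥ p_opt > 0. Then ∑_{i=2}^n [P(X = x_i)/P(X ≤ x_i)] · (1/√(P(X < x_i))) ≤ 2/√(p_opt). -/

import Mathlib

/-!
Writing `S i = p 1 + ⋯ + p i`, the `i`-th term is `(S i - S (i-1)) / (S i * √S (i-1))`, which
is at most `2 (1/√S (i-1) - 1/√S i)`: with `s = √S (i-1) ≤ t = √S i`, the difference is
`(t - s)² / (t² s) ≥ 0`. The sum therefore telescopes to at most `2 / √S 1 = 2 / √p 1`.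
-/

open Finset

theorem Finset.sum_Ioc_sub_pred {M : Type*} [AddCommGroup M] (g : ℕ → M) {m n : ℕ}
    (hmn : m ≤ n) : ∑ i ∈ Ioc m n, (g (i - 1) - g i) = g m - g n := by
  induction n, hmn using Nat.le_induction with
  | base => simp
  | succ n hmn ih =>
    rw [sum_Ioc_succ_top hmn, ih, Nat.add_sub_cancel]
    abel

theorem sub_div_mul_one_div_sqrt_le {a b : ℝ} (ha : 0 < a) (hab : a ≤ b) :
    (b - a) / b * (1 / √a) ≤ 2 * (1 / √a - 1 / √b) := by
  obtain ⟨s, hs, rfl⟩ : ∃ s, 0 < s ∧ s ^ 2 = a :=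
    ⟨√a, Real.sqrt_pos.2 ha, Real.sq_sqrt ha.le⟩
  obtain ⟨t, ht, rfl⟩ : ∃ t, 0 < t ∧ t ^ 2 = b :=
    ⟨√b, Real.sqrt_pos.2 (ha.trans_le hab), Real.sq_sqrt (ha.trans_le hab).le⟩
  rw [Real.sqrt_sq hs.le, Real.sqrt_sq ht.le]
  have hgap : 2 * (1 / s - 1 / t) - (t ^ 2 - s ^ 2) / t ^ 2 * (1 / s) =
      (t - s) ^ 2 / (t ^ 2 * s) := by
    field_simp
    ring
  have : 0 ≤ (t - s) ^ 2 / (t ^ 2 * s) := by positivity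
  linarith

theorem minimum_finding_query_sum_bound_general (n : ℕ) (hn : 1 ≤ n) (p : ℕ → ℝ)
    (hp : ∀ i ∈ Finset.Icc 1 n, 0 ≤ p i)
    (popt : ℝ) (hpopt : 0 < popt) (hp1 : popt ≤ p 1) :
    (∑ i ∈ Finset.Icc 2 n,
        (p i / ∑ j ∈ Finset.Icc 1 i, p j) *
          (1 / Real.sqrt (∑ j ∈ Finset.Icc 1 (i - 1), p j)))
      ≤ 2 / Real.sqrt popt := by
  set S : ℕ → ℝ := fun i => ∑ j ∈ Icc 1 i, p j
  have hS_ge : ∀ i ∈ Icc 1 n, popt ≤ S i := fun i hi =>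
    hp1.trans <| single_le_sum (fun j hj => hp j (Icc_subset_Icc_right (mem_Icc.1 hi).2 hj))
      (by simp [(mem_Icc.1 hi).1])
  have hterm : ∀ i ∈ Ioc 1 n, p i / S i * (1 / √(S (i - 1))) ≤
      2 * (1 / √(S (i - 1)) - 1 / √(S i)) := by
    intro i hi
    obtain ⟨hi1, hin⟩ := mem_Ioc.1 hi
    have hS_succ : S i = S (i - 1) + p i := by
      simpa [Nat.sub_add_cancel hi1.le] using sum_Icc_succ_top (by omega : 1 ≤ i - 1 + 1) p
    have hpos : 0 < S (i - 1) := hpopt.trans_le (hS_ge _ (mem_Icc.2 ⟨by omega, by omega⟩))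
    have hmono : S (i - 1) ≤ S i := by linarith [hp i (mem_Icc.2 ⟨hi1.le, hin⟩)]
    simpa [hS_succ] using sub_div_mul_one_div_sqrt_le hpos hmono
  calc ∑ i ∈ Ioc 1 n, p i / S i * (1 / √(S (i - 1)))
      ≤ ∑ i ∈ Ioc 1 n, 2 * (1 / √(S (i - 1)) - 1 / √(S i)) := sum_le_sum hterm
    _ = 2 * (1 / √(S 1) - 1 / √(S n)) := by
      rw [← mul_sum, sum_Ioc_sub_pred (fun i => 1 / √(S i)) hn]
    _ ≤ 2 / √popt := by
      have : 1 / √(S 1) ≤ 1 / √popt := one_div_le_one_div_of_le (Real.sqrt_pos.2 hpopt)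
        (Real.sqrt_le_sqrt (hS_ge 1 (mem_Icc.2 ⟨le_rfl, hn⟩)))
      have : 0 ≤ 1 / √(S n) := by positivity
      rw [div_eq_mul_one_div 2]
      linarith

/-- Let `X` take values `x_1 < … < x_n` with probabilities `p_i ≥ 0`, `∑ p_i = 1`,
and suppose `P(X = x_1) = p_1 ≥ p_opt > 0`. Then
`∑_{i=2}^n [P(X=x_i)/P(X≤x_i)] · (1/√(P(X<x_i))) ≤ 2/√p_opt`, where
`P(X ≤ x_i) = ∑_{j≤i} p_j` and `P(X < x_i) = ∑_{j<i} p_j`. -/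
theorem minimum_finding_query_sum_bound (n : ℕ) (hn : 1 ≤ n) (p : ℕ → ℝ)
    (hp : ∀ i ∈ Finset.Icc 1 n, 0 ≤ p i)
    (hsum : ∑ i ∈ Finset.Icc 1 n, p i = 1)
    (popt : ℝ) (hpopt : 0 < popt) (hp1 : popt ≤ p 1) :
    (∑ i ∈ Finset.Icc 2 n,
        (p i / ∑ j ∈ Finset.Icc 1 i, p j) *
          (1 / Real.sqrt (∑ j ∈ Finset.Icc 1 (i - 1), p j)))
      ≤ 2 / Real.sqrt popt :=
  minimum_finding_query_sum_bound_general n hn p hp popt hpopt hp1
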